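/- Let p be an odd prime, m ≥ 2 an integer, q = p^m, and let f : 𝔽_q → 𝔽_p be a bent function with f(0) = 0. Then f is surjective, i.e., for every i ∈ 𝔽_p there exists x ∈ 𝔽_q with f(x) = i. -/

import Mathlib

open Finset Polynomial

noncomputable def zeta (p : ℕ) (a : ZMod p) : ℂ :=
  Complex.exp (2 * Real.pi * Complex.I / p) ^ a.val
noncomputable def walsh (p : ℕ) {F : Type*} [Fintype F] [CommRing F] [Algebra (ZMod p) F]
    (f : F → ZMod p) (β : F) : ℂ :=
  ∑ x : F, zeta p (f x - Algebra.trace (ZMod p) F (β * x))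

lemma zeta_add (p : ℕ) [Fact p.Prime] (a b : ZMod p) :
    zeta p (a + b) = zeta p a * zeta p b := by
  haveI : NeZero p := ⟨(Fact.out : p.Prime).ne_zero⟩
  have hζ : Complex.exp (2 * Real.pi * Complex.I / p) ^ p = 1 :=
    (Complex.isPrimitiveRoot_exp p (Fact.out : p.Prime).ne_zero).pow_eq_one
  unfold zeta
  set ζ := Complex.exp (2 * Real.pi * Complex.I / p) with hζdef
  have key : ∀ n : ℕ, ζ ^ (n % p) = ζ ^ n := by
    intro n
    conv_rhs => rw [← Nat.mod_add_div n p]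
    rw [pow_add, pow_mul, hζ, one_pow, mul_one]
  rw [ZMod.val_add, key, pow_add]

lemma zeta_zero (p : ℕ) [Fact p.Prime] : zeta p 0 = 1 := by
  haveI : NeZero p := ⟨(Fact.out : p.Prime).ne_zero⟩
  simp [zeta, ZMod.val_zero]

lemma zeta_conj (p : ℕ) [Fact p.Prime] (a : ZMod p) :
    (starRingEnd ℂ) (zeta p a) = zeta p (-a) := by
  have habs : ‖zeta p a‖ = 1 := by
    have harg : (2 * (Real.pi:ℂ) * Complex.I / p) = ((2 * Real.pi / p : ℝ) : ℂ) * Complex.I := by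
      push_cast; ring
    simp only [zeta, norm_pow, harg, Complex.norm_exp_ofReal_mul_I, one_pow]
  have h1 : zeta p a * zeta p (-a) = 1 := by
    rw [← zeta_add, add_neg_cancel, zeta_zero]
  have h2 : zeta p a * (starRingEnd ℂ) (zeta p a) = 1 := by
    rw [Complex.mul_conj]
    norm_cast
    rw [← Complex.sq_norm, habs]
    norm_num
  have hne : zeta p a ≠ 0 := by
    intro h; rw [h, zero_mul] at h1; exact zero_ne_one h1
  exact mul_left_cancel₀ hne (h2.trans h1.symm)

lemma cyclo_indep (p : ℕ) [hp : Fact p.Prime] (A : ℕ → ℚ)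
    (h : ∑ j ∈ range p, (A j : ℂ) * Complex.exp (2 * Real.pi * Complex.I / p) ^ j = 0) :
    ∀ j, j < p → A j = A (p - 1) := by
  have hp' := (Fact.out : p.Prime)
  have hpos : 0 < p := hp'.pos
  set ζ : ℂ := Complex.exp (2 * Real.pi * Complex.I / p) with hζdef
  have hζ : IsPrimitiveRoot ζ p := Complex.isPrimitiveRoot_exp p hp'.ne_zero
  set g : ℚ[X] := (∑ j ∈ range p, C (A j) * X ^ j) - C (A (p - 1)) * cyclotomic p ℚ with hgdef
  have hcoeff : ∀ k, g.coeff k = if k < p then A k - A (p - 1) else 0 := by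
    intro k
    have h1 : (∑ j ∈ range p, C (A j) * X ^ j).coeff k = if k < p then A k else 0 := by
      rw [finset_sum_coeff]
      simp only [coeff_C_mul, coeff_X_pow]
      rw [Finset.sum_congr rfl (fun j _ => by rw [mul_ite, mul_one, mul_zero])]
      rw [Finset.sum_ite_eq (range p) k A]
      simp [Finset.mem_range]
    have h2 : (cyclotomic p ℚ).coeff k = if k < p then 1 else 0 := by
      rw [cyclotomic_prime]
      rw [finset_sum_coeff]
      simp only [coeff_X_pow]
      rw [Finset.sum_ite_eq (range p) k (fun _ => (1:ℚ))]
      simp [Finset.mem_range]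
    rw [hgdef, coeff_sub, h1, coeff_C_mul, h2]
    split <;> ring
  have hg : aeval ζ g = 0 := by
    have hroot : aeval ζ (cyclotomic p ℚ) = 0 := by
      rw [aeval_def, ← eval_map, map_cyclotomic]
      exact (hζ.isRoot_cyclotomic hpos).eq_zero
    rw [hgdef, map_sub, map_mul, hroot, mul_zero, sub_zero, map_sum]
    rw [← h]
    apply Finset.sum_congr rfl
    intro j _
    rw [map_mul, map_pow, aeval_C, aeval_X]
    norm_cast
  have hg0 : g = 0 := by
    by_contra hne
    have hdvd : minpoly ℚ ζ ∣ g := minpoly.dvd ℚ ζ hg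
    rw [← cyclotomic_eq_minpoly_rat hζ hpos] at hdvd
    have hdeg : (cyclotomic p ℚ).natDegree ≤ g.natDegree := natDegree_le_of_dvd hdvd hne
    rw [natDegree_cyclotomic, Nat.totient_prime hp'] at hdeg
    have hle : g.natDegree ≤ p - 1 := by
      apply natDegree_le_iff_coeff_eq_zero.mpr
      intro k hk
      rw [hcoeff k, if_neg]
      omega
    have hnd : g.natDegree = p - 1 := le_antisymm hle hdeg
    apply hne
    rw [← leadingCoeff_eq_zero, leadingCoeff, hnd, hcoeff]
    rw [if_pos (by omega)]
    ring
  intro j hj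
  have := congrArg (fun q : ℚ[X] => q.coeff j) hg0
  simp only [hg0, coeff_zero] at this ⊢
  have h2 := hcoeff j
  rw [hg0, coeff_zero, if_pos hj] at h2
  linarith

/-- Lemma 4.1(i). Let `p` be an odd prime, `m ≥ 2`, `q = p^m` and
`f : 𝔽_q → 𝔽_p` a bent function (`|W_f(β)|² = q` for all `β`) with `f(0) = 0`.
Then `f` is surjective. -/
theorem stmt_4 (p m : ℕ) [Fact p.Prime] (hp : Odd p) (hm : 2 ≤ m)
    (F : Type*) [Field F] [Fintype F] [Algebra (ZMod p) F]
    (hcard : Fintype.card F = p ^ m)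
    (f : F → ZMod p) (hf0 : f 0 = 0)
    (hbent : ∀ β : F, ‖walsh p f β‖ ^ 2 = (p : ℝ) ^ m) :
    Function.Surjective f := by
  classical
  have hp' : p.Prime := Fact.out
  haveI : NeZero p := ⟨hp'.ne_zero⟩
  have hp2 : 2 ≤ p := hp'.two_le
  intro i
  by_contra hi
  push_neg at hi
  set ζ : ℂ := Complex.exp (2 * Real.pi * Complex.I / p) with hζdef
  set N : ZMod p → ℕ := fun j => (univ.filter (fun x : F => f x = j)).card with hN
  set c : ZMod p → ℕ := fun d => (univ.filter (fun z : F × F => f z.1 - f z.2 = d)).card with hc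
  -- Walsh at 0
  have hW0 : walsh p f 0 = ∑ x : F, zeta p (f x) := by
    unfold walsh
    apply Finset.sum_congr rfl
    intro x _
    rw [zero_mul, map_zero, sub_zero]
  have hWconj : (∑ x : F, zeta p (f x)) * (starRingEnd ℂ) (∑ x : F, zeta p (f x))
      = (p : ℂ) ^ m := by
    rw [Complex.mul_conj]
    have hb := hbent 0
    rw [hW0, Complex.sq_norm] at hb
    rw [hb]
    push_cast
    ring
  have hprod : (∑ x : F, zeta p (f x)) * (starRingEnd ℂ) (∑ x : F, zeta p (f x))
      = ∑ z : F × F, zeta p (f z.1 - f z.2) := by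
    rw [map_sum, Finset.sum_mul_sum, ← Finset.univ_product_univ, Finset.sum_product]
    apply Finset.sum_congr rfl
    intro x _
    apply Finset.sum_congr rfl
    intro y _
    rw [zeta_conj, ← zeta_add, sub_eq_add_neg]
  have hfiber : ∑ z : F × F, zeta p (f z.1 - f z.2) = ∑ d : ZMod p, (c d : ℂ) * zeta p d := by
    rw [← Finset.sum_fiberwise' univ (fun z : F × F => f z.1 - f z.2) (fun d => zeta p d)]
    apply Finset.sum_congr rfl
    intro d _
    rw [Finset.sum_const, nsmul_eq_mul]
  have hkey : ∑ d : ZMod p, (c d : ℂ) * zeta p d = (p : ℂ) ^ m := by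
    rw [← hfiber, ← hprod, hWconj]
  -- convert to sum over range p
  have hrange : ∑ d : ZMod p, (c d : ℂ) * zeta p d
      = ∑ j ∈ range p, (c ((j : ℕ) : ZMod p) : ℂ) * ζ ^ j := by
    apply Finset.sum_nbij' (fun d : ZMod p => d.val) (fun j : ℕ => (j : ZMod p))
    · intro d _; exact Finset.mem_range.mpr (ZMod.val_lt d)
    · intro j _; exact Finset.mem_univ _
    · intro d _; exact ZMod.natCast_rightInverse d
    · intro j hj; exact ZMod.val_cast_of_lt (Finset.mem_range.mp hj)
    · intro d _
      rw [ZMod.natCast_rightInverse d]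
      rfl
  -- the coefficient function
  set A : ℕ → ℚ := fun j => (c ((j : ℕ) : ZMod p) : ℚ) - (if j = 0 then (p : ℚ) ^ m else 0)
    with hA
  have hAzero : ∑ j ∈ range p, (A j : ℂ) * ζ ^ j = 0 := by
    have expand : ∀ j ∈ range p, (A j : ℂ) * ζ ^ j
        = (c ((j : ℕ) : ZMod p) : ℂ) * ζ ^ j - (if j = 0 then ((p : ℂ) ^ m) * ζ ^ j else 0) := by
      intro j _
      by_cases hj : j = 0
      · simp only [hA, if_pos hj, hj]
        push_cast; ring
      · simp only [hA, if_neg hj]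
        push_cast; ring
    rw [Finset.sum_congr rfl expand, Finset.sum_sub_distrib]
    rw [← hrange, hkey]
    rw [Finset.sum_ite_eq' (range p) 0 (fun j => ((p : ℂ) ^ m) * ζ ^ j)]
    rw [if_pos (Finset.mem_range.mpr hp'.pos)]
    simp
  have hind := cyclo_indep p A hAzero
  -- consequences
  set cV : ℕ := c (((p - 1 : ℕ) : ZMod p)) with hcV
  have hApm1 : A (p - 1) = (cV : ℚ) := by
    rw [hA]
    simp only []
    rw [if_neg (by omega)]
    ring
  have hconst : ∀ d : ZMod p, d ≠ 0 → c d = cV := by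
    intro d hd
    have hv1 : d.val < p := ZMod.val_lt d
    have hv2 : d.val ≠ 0 := fun h => hd ((ZMod.val_eq_zero d).mp h)
    have := hind d.val hv1
    rw [hApm1, hA] at this
    simp only [if_neg hv2, sub_zero, ZMod.natCast_rightInverse d] at this
    exact_mod_cast this
  have hc0 : (c 0 : ℚ) = (p : ℚ) ^ m + (cV : ℚ) := by
    have h := hind 0 hp'.pos
    rw [hApm1, hA] at h
    simp at h
    linarith
  -- total count
  have htot : ∑ d : ZMod p, c d = p ^ m * p ^ m := by
    rw [hc]
    have := Finset.card_eq_sum_card_fiberwise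
      (f := fun z : F × F => f z.1 - f z.2) (s := univ) (t := univ)
      (fun z _ => Finset.mem_univ _)
    rw [← this]
    rw [Finset.card_univ, Fintype.card_prod, hcard]
  -- c 0 = sum of squares
  have hc0N : c 0 = ∑ j : ZMod p, N j ^ 2 := by
    show (univ.filter (fun z : F × F => f z.1 - f z.2 = 0)).card = ∑ j : ZMod p, N j ^ 2
    have h1 := Finset.card_eq_sum_card_fiberwise
      (f := fun z : F × F => f z.1) (s := univ.filter (fun z : F × F => f z.1 - f z.2 = 0))
      (t := univ) (fun z _ => Finset.mem_univ _)
    rw [h1]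
    apply Finset.sum_congr rfl
    intro j _
    have : ((univ.filter (fun z : F × F => f z.1 - f z.2 = 0)).filter
        (fun z : F × F => f z.1 = j))
        = (univ.filter (fun x : F => f x = j)) ×ˢ (univ.filter (fun x : F => f x = j)) := by
      ext z
      simp only [Finset.mem_filter, Finset.mem_univ, true_and, Finset.mem_product, sub_eq_zero]
      constructor
      · rintro ⟨h1, h2⟩; exact ⟨h2, h1 ▸ h2⟩
      · rintro ⟨h1, h2⟩; exact ⟨h1.trans h2.symm, h1⟩
    rw [this, Finset.card_product, sq]
  -- sum of N equals p^m
  have hNtot : ∑ j : ZMod p, N j = p ^ m := by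
    rw [hN]
    have := Finset.card_eq_sum_card_fiberwise
      (f := f) (s := (univ : Finset F)) (t := univ) (fun x _ => Finset.mem_univ _)
    rw [← this, Finset.card_univ, hcard]
  have hNi : N i = 0 := by
    rw [hN, Finset.card_eq_zero, Finset.filter_eq_empty_iff]
    intro x _
    exact hi x
  -- Cauchy-Schwarz
  set s : Finset (ZMod p) := univ.erase i with hs
  have hCS : (∑ j ∈ s, (N j : ℚ)) ^ 2 ≤ (s.card : ℚ) * ∑ j ∈ s, (N j : ℚ) ^ 2 :=
    sq_sum_le_card_mul_sum_sq
  have hscard : s.card = p - 1 := by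
    rw [hs, Finset.card_erase_of_mem (Finset.mem_univ i), Finset.card_univ, ZMod.card]
  have hsum1 : ∑ j ∈ s, (N j : ℚ) = (p : ℚ) ^ m := by
    rw [hs, Finset.sum_erase _ (by rw [hNi]; norm_num)]
    rw [← Nat.cast_sum]
    rw [hNtot]
    push_cast
    ring
  have hsum2 : ∑ j ∈ s, (N j : ℚ) ^ 2 = (c 0 : ℚ) := by
    rw [hs, Finset.sum_erase _ (by rw [hNi]; norm_num)]
    rw [hc0N]
    push_cast
    ring
  rw [hsum1, hsum2, hscard] at hCS
  -- final contradiction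
  have hcast : ((p - 1 : ℕ) : ℚ) = (p : ℚ) - 1 := by
    push_cast [Nat.cast_sub (by omega : 1 ≤ p)]
    ring
  rw [hcast, hc0] at hCS
  -- equations
  have htotq : (p : ℚ) ^ m + (cV : ℚ) + ((p : ℚ) - 1) * (cV : ℚ) = (p : ℚ) ^ m * (p : ℚ) ^ m := by
    have h1 : (∑ d : ZMod p, (c d : ℚ)) = ((p ^ m * p ^ m : ℕ) : ℚ) := by
      rw [← Nat.cast_sum, htot]
    rw [Finset.sum_eq_add_sum_sdiff_singleton_of_mem (Finset.mem_univ (0 : ZMod p))] at h1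
    have h2 : ∑ d ∈ univ \ {(0 : ZMod p)}, (c d : ℚ) = ((p : ℚ) - 1) * (cV : ℚ) := by
      rw [Finset.sum_congr rfl (fun d hd => by
        rw [hconst d (by simpa using (Finset.mem_sdiff.mp hd).2)])]
      rw [Finset.sum_const, nsmul_eq_mul]
      congr 1
      rw [Finset.card_sdiff_of_subset (by simp), Finset.card_univ, ZMod.card, Finset.card_singleton]
      push_cast [Nat.cast_sub (by omega : 1 ≤ p)]
      ring
    rw [h2, hc0] at h1
    push_cast at h1 ⊢
    linarith
  -- now derive contradiction
  set u : ℚ := (p : ℚ) with hu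
  set v : ℚ := (p : ℚ) ^ (m - 1) with hv
  have hPuv : (p : ℚ) ^ m = u * v := by
    rw [hu, hv, ← pow_succ']
    congr 1
    omega
  have hu2 : (2 : ℚ) ≤ u := by rw [hu]; exact_mod_cast hp2
  have hvu : u ≤ v := by
    rw [hu, hv]
    calc (p : ℚ) = (p : ℚ) ^ 1 := (pow_one _).symm
    _ ≤ (p : ℚ) ^ (m - 1) := by
        apply pow_le_pow_right₀ (by linarith) (by omega)
  have hcVnn : (0 : ℚ) ≤ (cV : ℚ) := Nat.cast_nonneg _
  rw [hPuv] at hCS htotq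
  nlinarith [hCS, htotq, hu2, hvu, hcVnn, mul_pos (by linarith : (0:ℚ) < u) (by linarith : (0:ℚ) < v),
    mul_nonneg (mul_nonneg (by linarith : (0:ℚ) ≤ u) (by linarith : (0:ℚ) ≤ v)) (sub_nonneg.mpr hvu)]
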